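/- Let A be a real n×d matrix, S a real s×n matrix, T a real d×t matrix, ε ≥ 0, and k ≥ 0 an integer. Suppose (i) for every d×d orthogonal projection matrix P with rank(P) ≤ k, ‖A(I−P)‖_F² ≤ ‖SA(I−P)‖_F² ≤ (1+ε)‖A(I−P)‖_F², and (ii) for every s×s orthogonal projection matrix Q with rank(Q) ≤ k, ‖(SA)ᵀ(I−Q)‖_F² ≤ ‖Tᵀ(SA)ᵀ(I−Q)‖_F² ≤ (1+ε)‖(SA)ᵀ(I−Q)‖_F². Then res_k(A)² ≤ res_k(SAT)² ≤ (1+ε)²·res_k(A)². (This is the deterministic core of the paper's upper-bound theorem: if S and Tᵀ are rank-k projection-cost preserving sketches, then the rank-k residual of the bilinear sketch SAT approximates the rank-k residual of A.) -/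

import Mathlib

/-- Squared Frobenius norm of a real matrix. -/
noncomputable def frobSq {n d : ℕ} (M : Matrix (Fin n) (Fin d) ℝ) : ℝ :=
  ∑ i, ∑ j, (M i j) ^ 2

/-- An orthogonal projection matrix: symmetric and idempotent. -/
def IsOrthProj {d : ℕ} (P : Matrix (Fin d) (Fin d) ℝ) : Prop :=
  P.transpose = P ∧ P * P = P

/-- Squared rank-`k` residual error: infimum of `‖M - B‖_F²` over matrices `B` of rank `≤ k`. -/
noncomputable def resSq {n d : ℕ} (k : ℕ) (M : Matrix (Fin n) (Fin d) ℝ) : ℝ :=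
  sInf {x : ℝ | ∃ B : Matrix (Fin n) (Fin d) ℝ, B.rank ≤ k ∧ x = frobSq (M - B)}

/-!
Any `B` with `rank B ≤ k` satisfies `B = B P` for the orthogonal projection `P` onto its row
space, and then `‖M (1 - P)‖_F ≤ ‖M - B‖_F` by Pythagoras. Hence `resSq k M` is the infimum of
the projection costs `‖M (1 - P)‖_F²` over rank-`k` projections `P`, and a sketch preserving all
these costs up to a factor `c` preserves `resSq k` up to `c`. Apply this to `S` acting on `A`,
then, after transposing (which does not change `resSq k`), to `Tᵀ` acting on `(S A)ᵀ`.
-/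

open Matrix

lemma frobSq_nonneg {m n : ℕ} (M : Matrix (Fin m) (Fin n) ℝ) : 0 ≤ frobSq M := by
  unfold frobSq; positivity

lemma frobSq_eq_trace {m n : ℕ} (M : Matrix (Fin m) (Fin n) ℝ) :
    frobSq M = trace (M * Mᵀ) := by
  simp [frobSq, trace, mul_apply, sq]

lemma frobSq_transpose {m n : ℕ} (M : Matrix (Fin m) (Fin n) ℝ) : frobSq Mᵀ = frobSq M :=
  Finset.sum_comm

namespace IsOrthProj

variable {d : ℕ} {P : Matrix (Fin d) (Fin d) ℝ}

lemma one_sub (hP : IsOrthProj P) : IsOrthProj (1 - P) :=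
  ⟨by rw [transpose_sub, transpose_one, hP.1], by rw [sub_mul, mul_sub, mul_sub, hP.2]; simp⟩

lemma frobSq_mul {m : ℕ} (hP : IsOrthProj P) (X : Matrix (Fin m) (Fin d) ℝ) :
    frobSq (X * P) = trace (X * P * Xᵀ) := by
  rw [frobSq_eq_trace, transpose_mul, hP.1, Matrix.mul_assoc, ← Matrix.mul_assoc P, hP.2,
    Matrix.mul_assoc]

lemma frobSq_eq_add {m : ℕ} (hP : IsOrthProj P) (X : Matrix (Fin m) (Fin d) ℝ) :
    frobSq X = frobSq (X * P) + frobSq (X * (1 - P)) := by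
  rw [hP.frobSq_mul, hP.one_sub.frobSq_mul, frobSq_eq_trace, ← trace_add, ← Matrix.add_mul,
    ← Matrix.mul_add, add_sub_cancel, Matrix.mul_one]

lemma frobSq_mul_one_sub_le {m : ℕ} (hP : IsOrthProj P) {X B : Matrix (Fin m) (Fin d) ℝ}
    (hBP : B * P = B) : frobSq (X * (1 - P)) ≤ frobSq (X - B) := by
  have hB : B * (1 - P) = 0 := by rw [Matrix.mul_sub, Matrix.mul_one, hBP, sub_self]
  have hX : X * (1 - P) = (X - B) * (1 - P) := by rw [Matrix.sub_mul, hB, sub_zero]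
  rw [hX, hP.frobSq_eq_add (X - B)]
  linarith [frobSq_nonneg ((X - B) * P)]

end IsOrthProj

lemma exists_isOrthProj_rank_eq_mul_eq {m d : ℕ} (B : Matrix (Fin m) (Fin d) ℝ) :
    ∃ P : Matrix (Fin d) (Fin d) ℝ, IsOrthProj P ∧ P.rank = B.rank ∧ B * P = B := by
  let e : Matrix (Fin d) (Fin d) ℝ ≃⋆ₐ[ℝ] _ := toEuclideanCLM
  let U : Submodule ℝ (EuclideanSpace ℝ (Fin d)) :=
    (Submodule.span ℝ (Set.range B)).map (WithLp.linearEquiv 2 ℝ (Fin d → ℝ)).symm.toLinearMap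
  let P := e.symm U.starProjection
  have hPU : e P = U.starProjection := e.apply_symm_apply _
  have hPP : P * P = P := EquivLike.injective e <| by
    rw [map_mul, hPU, U.isIdempotentElem_starProjection.eq]
  have hPt : Pᵀ = P := EquivLike.injective e <| by
    rw [← conjTranspose_eq_transpose_of_trivial, ← star_eq_conjTranspose, map_star, hPU,
      (isSelfAdjoint_starProjection U).star_eq]
  refine ⟨P, ⟨hPt, hPP⟩, ?_, ?_⟩
  · have hPlin : toEuclideanLin P = (U.starProjection : _ →ₗ[ℝ] _) :=
      congrArg ContinuousLinearMap.toLinearMap hPU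
    rw [rank_eq_finrank_range_toLin P (PiLp.basisFun 2 ℝ (Fin d)) (PiLp.basisFun 2 ℝ (Fin d)),
      ← toLpLin_eq_toLin, hPlin, Submodule.range_starProjection, LinearEquiv.finrank_map_eq,
      rank_eq_finrank_span_row, row_def]
  · funext i
    have hmem : WithLp.toLp 2 (B i) ∈ U :=
      Submodule.mem_map_of_mem (Submodule.subset_span ⟨i, rfl⟩)
    have hfix := congrArg WithLp.ofLp (Submodule.starProjection_eq_self_iff.mpr hmem)
    rw [← hPU, ofLp_toEuclideanCLM] at hfix
    rw [mul_apply_eq_vecMul, ← mulVec_transpose, hPt]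
    exact hfix

section resSq

variable {m n : ℕ} {k : ℕ}

lemma resSq_le_frobSq_sub (M : Matrix (Fin m) (Fin n) ℝ) {B : Matrix (Fin m) (Fin n) ℝ}
    (hB : B.rank ≤ k) : resSq k M ≤ frobSq (M - B) :=
  csInf_le ⟨0, by rintro _ ⟨B, -, rfl⟩; exact frobSq_nonneg _⟩ ⟨B, hB, rfl⟩

lemma resSq_le_frobSq_mul_one_sub (M : Matrix (Fin m) (Fin n) ℝ) {P : Matrix (Fin n) (Fin n) ℝ}
    (hP : P.rank ≤ k) : resSq k M ≤ frobSq (M * (1 - P)) := by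
  rw [Matrix.mul_sub, Matrix.mul_one]
  exact resSq_le_frobSq_sub M ((rank_mul_le_right M P).trans hP)

lemma resSq_set_nonempty (M : Matrix (Fin m) (Fin n) ℝ) :
    {x : ℝ | ∃ B : Matrix (Fin m) (Fin n) ℝ, B.rank ≤ k ∧ x = frobSq (M - B)}.Nonempty :=
  ⟨frobSq (M - 0), 0, by simp, rfl⟩

lemma resSq_transpose_le (M : Matrix (Fin m) (Fin n) ℝ) : resSq k Mᵀ ≤ resSq k M := by
  refine le_csInf (resSq_set_nonempty M) ?_
  rintro _ ⟨B, hB, rfl⟩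
  calc resSq k Mᵀ ≤ frobSq (Mᵀ - Bᵀ) := resSq_le_frobSq_sub _ (by rwa [rank_transpose])
    _ = frobSq (M - B) := by rw [← transpose_sub, frobSq_transpose]

lemma resSq_transpose (M : Matrix (Fin m) (Fin n) ℝ) : resSq k Mᵀ = resSq k M :=
  (resSq_transpose_le M).antisymm (by simpa using resSq_transpose_le Mᵀ)

lemma resSq_le_mul_of_forall_isOrthProj {p : ℕ} {M : Matrix (Fin m) (Fin n) ℝ}
    {N : Matrix (Fin p) (Fin n) ℝ} {c : ℝ} (hc : 0 ≤ c)
    (h : ∀ P : Matrix (Fin n) (Fin n) ℝ, IsOrthProj P → P.rank ≤ k →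
      frobSq (N * (1 - P)) ≤ c * frobSq (M * (1 - P))) :
    resSq k N ≤ c * resSq k M := by
  conv_rhs => rw [resSq, ← smul_eq_mul, ← Real.sInf_smul_of_nonneg hc]
  refine le_csInf ((resSq_set_nonempty M).smul_set) ?_
  rintro _ ⟨_, ⟨B, hB, rfl⟩, rfl⟩
  obtain ⟨P, hP, hPB, hBP⟩ := exists_isOrthProj_rank_eq_mul_eq B
  have hPk : P.rank ≤ k := hPB ▸ hB
  calc resSq k N ≤ frobSq (N * (1 - P)) := resSq_le_frobSq_mul_one_sub N hPk
    _ ≤ c * frobSq (M * (1 - P)) := h P hP hPk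
    _ ≤ c * frobSq (M - B) := mul_le_mul_of_nonneg_left (hP.frobSq_mul_one_sub_le hBP) hc

end resSq

/-- `N` is a rank-`k` projection-cost preserving sketch of `M` with distortion `c`. -/
def IsProjCostPreserving {m p n : ℕ} (k : ℕ) (c : ℝ) (M : Matrix (Fin m) (Fin n) ℝ)
    (N : Matrix (Fin p) (Fin n) ℝ) : Prop :=
  ∀ P : Matrix (Fin n) (Fin n) ℝ, IsOrthProj P → P.rank ≤ k →
    frobSq (M * (1 - P)) ≤ frobSq (N * (1 - P)) ∧
      frobSq (N * (1 - P)) ≤ c * frobSq (M * (1 - P))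

namespace IsProjCostPreserving

variable {m p n k : ℕ} {c : ℝ} {M : Matrix (Fin m) (Fin n) ℝ} {N : Matrix (Fin p) (Fin n) ℝ}

lemma resSq_le (h : IsProjCostPreserving k c M N) : resSq k M ≤ resSq k N := by
  simpa using resSq_le_mul_of_forall_isOrthProj zero_le_one fun P hP hk => by
    simpa using (h P hP hk).1

lemma resSq_le_mul (h : IsProjCostPreserving k c M N) (hc : 0 ≤ c) :
    resSq k N ≤ c * resSq k M :=
  resSq_le_mul_of_forall_isOrthProj hc fun P hP hk => (h P hP hk).2

end IsProjCostPreserving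

theorem bilinear_sketch_preserves_residual {n d s t : ℕ}
    (A : Matrix (Fin n) (Fin d) ℝ) (S : Matrix (Fin s) (Fin n) ℝ)
    (T : Matrix (Fin d) (Fin t) ℝ) (ε : ℝ) (hε : 0 ≤ ε) (k : ℕ)
    (hS : ∀ P : Matrix (Fin d) (Fin d) ℝ, IsOrthProj P → P.rank ≤ k →
      frobSq (A * (1 - P)) ≤ frobSq (S * A * (1 - P)) ∧
      frobSq (S * A * (1 - P)) ≤ (1 + ε) * frobSq (A * (1 - P)))
    (hT : ∀ Q : Matrix (Fin s) (Fin s) ℝ, IsOrthProj Q → Q.rank ≤ k →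
      frobSq ((S * A).transpose * (1 - Q)) ≤
        frobSq (T.transpose * (S * A).transpose * (1 - Q)) ∧
      frobSq (T.transpose * (S * A).transpose * (1 - Q)) ≤
        (1 + ε) * frobSq ((S * A).transpose * (1 - Q))) :
    resSq k A ≤ resSq k (S * A * T) ∧
    resSq k (S * A * T) ≤ (1 + ε) ^ 2 * resSq k A := by
  have hS' : IsProjCostPreserving k (1 + ε) A (S * A) := hS
  have hT' : IsProjCostPreserving k (1 + ε) (S * A)ᵀ (Tᵀ * (S * A)ᵀ) := hT
  have hc : 0 ≤ 1 + ε := by linarith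
  have hSA : resSq k (S * A)ᵀ = resSq k (S * A) := resSq_transpose (S * A)
  have hSAT : resSq k (S * A * T) = resSq k (Tᵀ * (S * A)ᵀ) := by
    rw [← resSq_transpose, transpose_mul]
  constructor
  · calc resSq k A ≤ resSq k (S * A) := hS'.resSq_le
      _ = resSq k (S * A)ᵀ := hSA.symm
      _ ≤ resSq k (Tᵀ * (S * A)ᵀ) := hT'.resSq_le
      _ = resSq k (S * A * T) := hSAT.symm
  · calc resSq k (S * A * T) = resSq k (Tᵀ * (S * A)ᵀ) := hSAT
      _ ≤ (1 + ε) * resSq k (S * A)ᵀ := hT'.resSq_le_mul hc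
      _ = (1 + ε) * resSq k (S * A) := by rw [hSA]
      _ ≤ (1 + ε) * ((1 + ε) * resSq k A) := mul_le_mul_of_nonneg_left (hS'.resSq_le_mul hc) hc
      _ = (1 + ε) ^ 2 * resSq k A := by ring
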